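/- arXiv:1910.06485 — 5 statements merged into one kernel-verified Lean document; each statement's English description precedes it below -/
import Mathlib

section
/- Let R be a ring with identity and m ≥ 1. Then the centrosymmetric matrix ring S_{2m}(R) is Morita equivalent to the group algebra R[C_2] of the cyclic group C_2 of order 2, i.e., the category of left S_{2m}(R)-modules is equivalent to the category of left R[C_2]-modules. -/
/-- The set of centrosymmetric `n × n` matrices over `R`: matrices `a = (a i j)` with
`a i j = a i.rev j.rev` for all `i j : Fin n` (the 0-based version of the 1-based condition
`a_{ij} = a_{n+1-i, n+1-j}` for `1 ≤ i, j ≤ n`). -/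
def centroSet (R : Type*) [Ring R] (n : ℕ) : Set (Matrix (Fin n) (Fin n) R) :=
  {a | ∀ i j, a i j = a i.rev j.rev}

/-- The centrosymmetric matrix ring `S_n(R)`, as a subring of `M_n(R)`. -/
def centroSubring (R : Type*) [Ring R] (n : ℕ) : Subring (Matrix (Fin n) (Fin n) R) where
  carrier := centroSet R n
  zero_mem' := fun i j => by simp
  one_mem' := fun i j => by
    simp only [Matrix.one_apply, Fin.rev_inj]
  add_mem' := fun ha hb i j => by
    simp only [Matrix.add_apply]; rw [ha i j, hb i j]
  neg_mem' := fun ha i j => by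
    simp only [Matrix.neg_apply]; rw [ha i j]
  mul_mem' := by
    intro a b ha hb i j
    simp only [Matrix.mul_apply]
    calc ∑ k, a i k * b k j = ∑ k, a i.rev k.rev * b k.rev j.rev :=
          Finset.sum_congr rfl fun k _ => by rw [← ha i k, ← hb k j]
      _ = ∑ k, a i.rev k * b k j.rev :=
          Fintype.sum_bijective Fin.rev Fin.rev_involutive.bijective _ _ (fun k => rfl)

/-!
For a finite group `G`, the matrices indexed by `G × ι` that are invariant under right translation
by `G` have entries depending only on `g * g'⁻¹` and the `ι`-indices, and on them the matrix
product becomes the convolution product of `R[G]`; so they form a ring isomorphic to `M_ι(R[G])`.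
Splitting `Fin (2 * m)` into its first half and the mirror image of that half turns `Fin.rev` into
translation by the generator of `C₂`, whence `S_{2m}(R) ≅ M_m(R[C₂])`, which is Morita equivalent
to `R[C₂]`.
-/

open MonoidAlgebra Multiplicative

namespace Matrix

variable (R : Type*) [Ring R] (G : Type*) [Group G] (ι : Type*)
  [Fintype G] [DecidableEq G] [Fintype ι] [DecidableEq ι]

def rightInvariantSubring : Subring (Matrix (G × ι) (G × ι) R) where
  carrier := {a | ∀ h g g' p q, a (g * h, p) (g' * h, q) = a (g, p) (g', q)}
  zero_mem' _ _ _ _ _ := rfl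
  one_mem' h g g' p q := by simp [one_apply]
  add_mem' ha hb h g g' p q := by simp [ha h, hb h]
  neg_mem' ha h g g' p q := by simp [ha h]
  mul_mem' ha hb h g g' p q := by
    simp only [mul_apply]
    refine (Fintype.sum_equiv ((Equiv.mulRight h).prodCongr (Equiv.refl ι)) _ _ ?_).symm
    rintro ⟨k, r⟩
    simp [ha h, hb h]

variable {R G ι}

theorem mem_rightInvariantSubring {a : Matrix (G × ι) (G × ι) R} :
    a ∈ rightInvariantSubring R G ι ↔
      ∀ h g g' p q, a (g * h, p) (g' * h, q) = a (g, p) (g', q) :=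
  Iff.rfl

theorem apply_eq_of_mem_rightInvariantSubring {a : Matrix (G × ι) (G × ι) R}
    (ha : a ∈ rightInvariantSubring R G ι) (g g' : G) (p q : ι) :
    a (g, p) (g', q) = a (g * g'⁻¹, p) (1, q) := by
  simpa using (ha g'⁻¹ g g' p q).symm

variable (R G ι)

noncomputable def rightInvariantSubringEquiv :
    rightInvariantSubring R G ι ≃+* Matrix ι ι (MonoidAlgebra R G) where
  toFun a := of fun p q => ofCoeff (Finsupp.equivFunOnFinite.symm fun g => a.1 (g, p) (1, q))
  invFun M := ⟨of fun x y => (M x.2 y.2).coeff (x.1 * y.1⁻¹), fun h g g' p q => by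
    simp [mul_assoc]⟩
  left_inv a := by
    ext ⟨g, p⟩ ⟨g', q⟩
    simp [← apply_eq_of_mem_rightInvariantSubring a.2]
  right_inv M := by
    ext p q g
    simp
  map_mul' a b := by
    ext p q g
    simp only [Subring.coe_mul, mul_apply, Fintype.sum_prod_type, of_apply,
      Finsupp.equivFunOnFinite_symm_apply_apply, apply_eq_of_mem_rightInvariantSubring a.2 g,
      coeff_sum, Finsupp.coe_finsetSum, Finset.sum_apply, coeff_mul_apply_right, mul_zero,
      implies_true, Finsupp.sum_fintype]
    exact Finset.sum_comm
  map_add' a b := by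
    ext p q g
    simp

end Matrix

lemma Multiplicative.zmod_two_eq_one_or_eq_ofAdd_one (g : Multiplicative (ZMod 2)) :
    g = 1 ∨ g = ofAdd 1 := by
  revert g; decide

namespace Fin

def mirror (m : ℕ) (x : Multiplicative (ZMod 2) × Fin m) : Fin (2 * m) :=
  if x.1 = 1 then x.2.castLE (by omega) else (x.2.castLE (by omega)).rev

theorem mirror_injective (m : ℕ) : Function.Injective (mirror m) := by
  rintro ⟨g, p⟩ ⟨g', q⟩ h
  rcases g.zmod_two_eq_one_or_eq_ofAdd_one with rfl | rfl <;>
    rcases g'.zmod_two_eq_one_or_eq_ofAdd_one with rfl | rfl <;>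
    simp only [mirror, ofAdd_eq_one, one_ne_zero, ↓reduceIte, Fin.ext_iff, val_rev, val_castLE,
      Prod.mk.injEq, true_and, false_and] at h ⊢ <;> omega

noncomputable def mirrorEquiv (m : ℕ) : Multiplicative (ZMod 2) × Fin m ≃ Fin (2 * m) :=
  Equiv.ofBijective (mirror m) <| (Fintype.bijective_iff_injective_and_card _).2
    ⟨mirror_injective m, by simp [two_mul]⟩

theorem mirrorEquiv_mul_ofAdd_one {m : ℕ} (g : Multiplicative (ZMod 2)) (p : Fin m) :
    mirrorEquiv m (g * ofAdd 1, p) = (mirrorEquiv m (g, p)).rev := by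
  have h : (ofAdd 1 : Multiplicative (ZMod 2)) * ofAdd 1 = 1 := rfl
  rcases g.zmod_two_eq_one_or_eq_ofAdd_one with rfl | rfl <;> simp [mirrorEquiv, mirror, h]

end Fin

open Matrix

section Centrosymmetric

variable (R : Type*) [Ring R] (m : ℕ)

theorem submatrix_mirrorEquiv_mem_rightInvariantSubring_iff
    {a : Matrix (Fin (2 * m)) (Fin (2 * m)) R} :
    a.submatrix (Fin.mirrorEquiv m) (Fin.mirrorEquiv m) ∈
        rightInvariantSubring R (Multiplicative (ZMod 2)) (Fin m) ↔
      a ∈ centroSubring R (2 * m) := by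
  rw [mem_rightInvariantSubring]
  constructor
  · intro ha i j
    have hflip := ha (ofAdd 1) ((Fin.mirrorEquiv m).symm i).1 ((Fin.mirrorEquiv m).symm j).1
      ((Fin.mirrorEquiv m).symm i).2 ((Fin.mirrorEquiv m).symm j).2
    simpa [Fin.mirrorEquiv_mul_ofAdd_one] using hflip.symm
  · intro ha h g g' p q
    rcases h.zmod_two_eq_one_or_eq_ofAdd_one with rfl | rfl
    · simp
    · simp only [submatrix_apply, Fin.mirrorEquiv_mul_ofAdd_one]
      exact (ha _ _).symm

noncomputable def centroSubringEquiv : centroSubring R (2 * m) ≃+*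
    Matrix (Fin m) (Fin m) (MonoidAlgebra R (Multiplicative (ZMod 2))) :=
  ((reindexRingEquiv R (Fin.mirrorEquiv m).symm).restrict _ _ fun _ =>
    (submatrix_mirrorEquiv_mem_rightInvariantSubring_iff R m).symm).trans
    (rightInvariantSubringEquiv R _ _)

end Centrosymmetric

open CategoryTheory in
/-- `S_{2m}(R)` is Morita equivalent to the group algebra `R[C_2]`: the category
of left `S_{2m}(R)`-modules is equivalent to the category of left `R[C_2]`-modules. -/
theorem centro_even_morita_groupAlgebra (R : Type u) [Ring R] (m : ℕ) (hm : 1 ≤ m) :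
    Nonempty (ModuleCat.{u} ↥(centroSubring R (2 * m)) ≌
      ModuleCat.{u} (MonoidAlgebra R (Multiplicative (ZMod 2)))) :=
  ⟨((ModuleCat.matrixEquivalence _ (⟨0, hm⟩ : Fin m)).trans
    (ModuleCat.restrictScalarsEquivalenceOfRingEquiv (centroSubringEquiv R m))).symm⟩
end

section
/- Let R be a ring with identity, n ≥ 4, and 1 ≤ j ≤ ⌊n/2⌋. Then the map φ: S_n(R)·f_1 → S_n(R)·f_j defined by a·f_1 ↦ a·f_1·(e_{1j} + e_{n,n+1-j}) is an isomorphism of left S_n(R)-modules. -/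
/-- The matrices `f_{ij}`: for `i ≠ j`, `f_{ij} = e_{ij} + e_{n+1-i, n+1-j}`, while
`f_{ii} = e_{ii} + σ_{i,n+1-i} e_{n+1-i,n+1-i}` with `σ` the anti-Kronecker delta
(`σ_{ij} = 0` if `i = j` and `σ_{ij} = 1` otherwise); written 0-based using `Fin.rev`. -/
def fMat (R : Type*) [Ring R] (n : ℕ) (i j : Fin n) : Matrix (Fin n) (Fin n) R :=
  if i = j then
    Matrix.single i i 1 +
      (if i = i.rev then 0 else Matrix.single i.rev i.rev 1)
  else Matrix.single i j 1 + Matrix.single i.rev j.rev 1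

/-!
`f₁` and `f_j` are equivalent idempotents of `S_n(R)`: `u = f_{1j}` and `v = f_{j1}` are
centrosymmetric with `u v = f₁`, `v u = f_j`, `u f_j = u` and `v f₁ = v`, so right multiplication
by `u` and by `v` are mutually inverse `S_n(R)`-linear maps between `S_n(R) f₁` and `S_n(R) f_j`.
These products of matrix units rely on `1 ≠ n` and `j ≠ n + 1 - j`.
-/

namespace Subring

variable {A : Type*} [Ring A] (S : Subring A) {e f u v : A}

theorem mul_mem_span_singleton_of_mul_eq {x : A} (hx : x ∈ Submodule.span S {e}) (hu : u ∈ S)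
    (heu : e * u = u) (huf : u * f = u) : x * u ∈ Submodule.span S {f} := by
  obtain ⟨s, rfl⟩ := Submodule.mem_span_singleton.mp hx
  refine Submodule.mem_span_singleton.mpr ⟨s * ⟨u, hu⟩, ?_⟩
  simp only [smul_def, smul_eq_mul, coe_mul, mul_assoc, heu, huf]

theorem mul_eq_self_of_mem_span_singleton {x : A} (hx : x ∈ Submodule.span S {e})
    (he : e * e = e) : x * e = x := by
  obtain ⟨s, rfl⟩ := Submodule.mem_span_singleton.mp hx
  simp only [smul_def, smul_eq_mul, mul_assoc, he]

def spanSingletonMulRight (hu : u ∈ S) (heu : e * u = u) (huf : u * f = u) :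
    Submodule.span S {e} →ₗ[S] Submodule.span S {f} where
  toFun x := ⟨x * u, mul_mem_span_singleton_of_mul_eq S x.2 hu heu huf⟩
  map_add' x y := Subtype.ext (add_mul (x : A) y u)
  map_smul' s x := Subtype.ext (smul_mul_assoc s (x : A) u)

def spanSingletonEquivOfMul (hu : u ∈ S) (hv : v ∈ S) (huv : u * v = e) (hvu : v * u = f)
    (huf : u * f = u) (hve : v * e = v) :
    Submodule.span S {e} ≃ₗ[S] Submodule.span S {f} :=
  have heu : e * u = u := by rw [← huv, mul_assoc, hvu, huf]
  have hfv : f * v = v := by rw [← hvu, mul_assoc, huv, hve]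
  have he : e * e = e := by nth_rw 2 [← huv]; rw [← mul_assoc, heu, huv]
  have hf : f * f = f := by nth_rw 2 [← hvu]; rw [← mul_assoc, hfv, hvu]
  LinearEquiv.ofLinearMap (spanSingletonMulRight S hu heu huf)
    (spanSingletonMulRight S hv hfv hve)
    (LinearMap.ext fun y => Subtype.ext <| by
      change (y : A) * v * u = y
      rw [mul_assoc, hvu, mul_eq_self_of_mem_span_singleton S y.2 hf])
    (LinearMap.ext fun x => Subtype.ext <| by
      change (x : A) * u * v = x
      rw [mul_assoc, huv, mul_eq_self_of_mem_span_singleton S x.2 he])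

end Subring

theorem Fin.ne_rev_of_two_mul_lt {n : ℕ} {i : Fin n} (hi : 2 * (i : ℕ) + 1 < n) : i ≠ i.rev :=
  fun h => by have := congrArg Fin.val h; rw [Fin.val_rev] at this; omega

section fMat

variable (R : Type*) [Ring R] {n : ℕ}

theorem fMat_of_ne_rev {a : Fin n} (b : Fin n) (ha : a ≠ a.rev) :
    fMat R n a b = Matrix.single a b 1 + Matrix.single a.rev b.rev 1 := by
  unfold fMat
  split_ifs with hab
  · subst hab; rfl
  · rfl

theorem fMat_mul_fMat {a b d : Fin n} (ha : a ≠ a.rev) (hb : b ≠ b.rev) :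
    fMat R n a b * fMat R n b d = fMat R n a d := by
  simp [fMat_of_ne_rev R _ ha, fMat_of_ne_rev R d hb, add_mul, mul_add, hb, hb.symm]

theorem fMat_mem_centroSubring {a : Fin n} (b : Fin n) (ha : a ≠ a.rev) :
    fMat R n a b ∈ centroSubring R n := by
  intro i k
  simp only [fMat_of_ne_rev R b ha, Matrix.add_apply, Matrix.single_apply, Fin.rev_eq_iff,
    Fin.rev_rev]
  rw [add_comm]

end fMat

/-- for `n ≥ 4` and `1 ≤ j ≤ ⌊n/2⌋` (0-based: `j.val + 1 ≤ n/2`), the map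
`φ : S_n(R)·f_1 → S_n(R)·f_j`, `a·f_1 ↦ a·f_1·(e_{1j} + e_{n,n+1-j})`, is an isomorphism of
left `S_n(R)`-modules.  (Here `e_{1j} + e_{n,n+1-j} = f_{1j}`, and `S_n(R)·f_i` is realised as
the span of `f_i` over the subring `S_n(R)` inside `M_n(R)`.) -/
theorem centro_span_f_one_iso (R : Type*) [Ring R] (n : ℕ) (hn : 4 ≤ n) (j : Fin n)
    (hj : (j : ℕ) + 1 ≤ n / 2) :
    ∃ φ : ↥(Submodule.span ↥(centroSubring R n)
            {fMat R n (⟨0, by omega⟩ : Fin n) (⟨0, by omega⟩ : Fin n)}) ≃ₗ[↥(centroSubring R n)]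
          ↥(Submodule.span ↥(centroSubring R n) {fMat R n j j}),
      ∀ x, (φ x : Matrix (Fin n) (Fin n) R) =
        (x : Matrix (Fin n) (Fin n) R) * fMat R n (⟨0, by omega⟩ : Fin n) j := by
  have h0 : (⟨0, by omega⟩ : Fin n) ≠ Fin.rev ⟨0, by omega⟩ :=
    Fin.ne_rev_of_two_mul_lt (show 2 * 0 + 1 < n by omega)
  have hjrev : j ≠ j.rev := Fin.ne_rev_of_two_mul_lt (by omega)
  exact ⟨Subring.spanSingletonEquivOfMul _ (fMat_mem_centroSubring R j h0)
    (fMat_mem_centroSubring R _ hjrev) (fMat_mul_fMat R h0 hjrev) (fMat_mul_fMat R hjrev h0)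
    (fMat_mul_fMat R h0 hjrev) (fMat_mul_fMat R hjrev h0), fun _ => rfl⟩
end

section
/- Let R be a commutative ring, m ≥ 0 and n = 2m+1. Set f := e_{m+1,m+1} ∈ S_n(R). Then f·S_n(R)·f = R·f; in particular, the map R → f·S_n(R)·f sending r to r·f is an isomorphism of R-algebras. -/
/-- The matrix unit `f = e_{m+1, m+1}` in `M_{2m+1}(R)` (0-based: the `(m, m)` matrix unit). -/
def midE (R : Type*) [Ring R] (m : ℕ) : Matrix (Fin (2*m+1)) (Fin (2*m+1)) R :=
  Matrix.single ⟨m, by omega⟩ ⟨m, by omega⟩ 1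

theorem smul_mem_centroSubring {R : Type*} [Ring R] {n : ℕ} (r : R)
    {a : Matrix (Fin n) (Fin n) R} (ha : a ∈ centroSubring R n) : r • a ∈ centroSubring R n :=
  fun i j => by rw [Matrix.smul_apply, Matrix.smul_apply, ha i j]

section midE

variable {R : Type*} [Ring R] {m : ℕ}

theorem midE_mul_mul_midE (s : Matrix (Fin (2*m+1)) (Fin (2*m+1)) R) :
    midE R m * s * midE R m = s ⟨m, by omega⟩ ⟨m, by omega⟩ • midE R m := by
  simp [midE, Matrix.single_mul_mul_single, Matrix.smul_single]

theorem isIdempotentElem_midE : IsIdempotentElem (midE R m) := by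
  simp [IsIdempotentElem, midE, Matrix.single_mul_single_same]

theorem smul_midE_injective : Function.Injective (fun r : R => r • midE R m) := by
  intro r r' h
  simpa [midE] using congrFun (congrFun h ⟨m, by omega⟩) ⟨m, by omega⟩

end midE

/-- for `n = 2m+1` and `f = e_{m+1,m+1}`, one has `f·S_n(R)·f = R·f`; in
particular `r ↦ r·f` is an isomorphism of `R`-algebras from `R` onto `f·S_n(R)·f` (it is
bijective onto `f·S_n(R)·f` and multiplicative). -/
theorem corner_eq_scalar_mul (R : Type*) [CommRing R] (m : ℕ) :
    ({x : Matrix (Fin (2*m+1)) (Fin (2*m+1)) R |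
        ∃ s ∈ centroSubring R (2*m+1), x = midE R m * s * midE R m} =
      {x : Matrix (Fin (2*m+1)) (Fin (2*m+1)) R | ∃ r : R, x = r • midE R m}) ∧
    Function.Injective (fun r : R => r • midE R m) ∧
    (∀ r r' : R, (r • midE R m) * (r' • midE R m) = (r * r') • midE R m) := by
  refine ⟨?_, smul_midE_injective, fun r r' => ?_⟩
  · ext x
    constructor
    · rintro ⟨s, -, rfl⟩
      exact ⟨_, midE_mul_mul_midE s⟩
    · rintro ⟨r, rfl⟩
      refine ⟨r • 1, smul_mem_centroSubring r (one_mem _), ?_⟩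
      rw [midE_mul_mul_midE]; simp
  · rw [smul_mul_smul_comm, isIdempotentElem_midE.eq]
end

section
/- Let R be a commutative ring, m ≥ 1 and n = 2m+1, and let J := S_n(R)·e_{m+1,m+1}·S_n(R) be the two-sided ideal of S_n(R) generated by the idempotent e_{m+1,m+1}. Then the quotient ring S_n(R)/J is isomorphic as an R-algebra to the full matrix algebra M_m(R), via the map induced by sending f_{ij} to the matrix unit of M_m(R) at position (i,j) for 1 ≤ i,j ≤ m. -/
/-- The centrosymmetric matrix algebra `S_n(R)` over a commutative ring `R`, as an
`R`-subalgebra of `M_n(R)`. -/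
def centroSubalgebra (R : Type*) [CommRing R] (n : ℕ) :
    Subalgebra R (Matrix (Fin n) (Fin n) R) :=
  { (centroSubring R n).toSubsemiring with
    algebraMap_mem' := fun r i j => by
      simp only [Matrix.algebraMap_matrix_apply, Fin.rev_inj] }

private theorem stdBasis_rev (R : Type*) [Ring R] {n : ℕ} (a b p q : Fin n) :
    Matrix.single a b (1:R) p.rev q.rev = Matrix.single a.rev b.rev 1 p q := by
  simp only [Matrix.single, Matrix.of_apply, Fin.rev_eq_iff]

theorem fMat_mem (R : Type*) [Ring R] (n : ℕ) (i j : Fin n) :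
    fMat R n i j ∈ centroSubring R n := by
  intro p q
  unfold fMat
  split_ifs with h1 h2
  · subst h1
    simp only [Matrix.add_apply, Matrix.zero_apply, add_zero]
    rw [stdBasis_rev, ← h2]
  · subst h1
    simp only [Matrix.add_apply]
    simp only [stdBasis_rev, Fin.rev_rev]
    exact add_comm _ _
  · simp only [Matrix.add_apply]
    simp only [stdBasis_rev, Fin.rev_rev]
    exact add_comm _ _

theorem fMat_memA (R : Type*) [CommRing R] (n : ℕ) (i j : Fin n) :
    fMat R n i j ∈ centroSubalgebra R n :=
  fMat_mem R n i j

private theorem midFin_rev (m : ℕ) :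
    (⟨m, by omega⟩ : Fin (2*m+1)).rev = ⟨m, by omega⟩ := by
  ext
  simp only [Fin.val_rev]
  omega

theorem midE_memA (R : Type*) [CommRing R] (m : ℕ) :
    midE R m ∈ centroSubalgebra R (2*m+1) := by
  have h := fMat_mem R (2*m+1) (⟨m, by omega⟩ : Fin (2*m+1)) ⟨m, by omega⟩
  unfold fMat at h
  rw [if_pos rfl, if_pos (midFin_rev m).symm, add_zero] at h
  exact h

/-- The two-sided ideal `J = S_n(R)·e_{m+1,m+1}·S_n(R)` of `S_n(R)` generated by the
idempotent `e_{m+1,m+1}`, for `n = 2m+1`. -/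
def midIdeal (R : Type*) [CommRing R] (m : ℕ) :
    TwoSidedIdeal ↥(centroSubalgebra R (2*m+1)) :=
  TwoSidedIdeal.span {(⟨midE R m, midE_memA R m⟩ : ↥(centroSubalgebra R (2*m+1)))}

/-!
On `S_{2m+1}(R)` consider `ψ(a)_{ij} = a_{ij} - a_{i,rev j}` for `i, j ≤ m`. It is the matrix
of `a` acting on `R^{2m+1} ⧸ {v | v ∘ rev = v} ≅ R^m`, `v ↦ (v_i - v_{rev i})_{i≤m}`, so it is
an algebra map `S_{2m+1}(R) → M_m(R)`; concretely, splitting `∑_k` into the pairs `{k, rev k}`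
and the middle index, centrosymmetry pairs up the terms and kills the middle one. It sends
`f_{ij}` to `e_{ij}`, hence is onto, and it kills `e = e_{m+1,m+1}`. Conversely, if `ψ(a) = 0`
then every row and column of `a` is `rev`-invariant, so `a` is the sum of
`a_{kl} f_{k,m+1} e f_{m+1,l}` over `k, l ≤ m + 1`, which lies in `J`. Hence `J = ker ψ`.
-/

theorem Nat.le_two_mul_add_one (m : ℕ) : m ≤ 2 * m + 1 := by omega

local notation "ι" => Fin.castLE (Nat.le_two_mul_add_one _)

namespace Fin

variable {m : ℕ}

theorem sum_univ_two_mul_add_one {M : Type*} [AddCommMonoid M] (F : Fin (2 * m + 1) → M) :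
    ∑ k, F k = ∑ k : Fin m, (F (ι k) + F (ι k).rev) + F ⟨m, by omega⟩ := by
  rw [← sum_congr' F (by omega : m + 1 + m = 2 * m + 1), sum_univ_add, sum_univ_castSucc,
    Finset.sum_add_distrib, add_right_comm]
  congr 2
  exact Fintype.sum_equiv revPerm _ _ fun k => congrArg F (by ext; simp; omega)

theorem forall_of_lt_of_rev {P : Fin (2 * m + 1) → Prop}
    (hlt : ∀ p : Fin (2 * m + 1), p.val < m → P p)
    (hmid : P ⟨m, by omega⟩) (hrev : ∀ p, P p → P p.rev) (p : Fin (2 * m + 1)) : P p := by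
  rcases lt_trichotomy p.val m with h | h | h
  · exact hlt p h
  · exact (Fin.ext h : p = ⟨m, by omega⟩) ▸ hmid
  · simpa using hrev _ (hlt p.rev (by simp; omega))

def minRev (r : Fin (2 * m + 1)) : Fin (m + 1) :=
  ⟨min r.val r.rev.val, by simp; omega⟩

theorem minRev_eq_iff {r : Fin (2 * m + 1)} {k : Fin (m + 1)} :
    r.minRev = k ↔ r = castLE (by omega) k ∨ r = (castLE (by omega) k).rev := by
  simp only [minRev, Fin.ext_iff, val_rev, val_castLE]
  omega

theorem castLE_minRev (r : Fin (2 * m + 1)) :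
    castLE (by omega) r.minRev = r ∨ castLE (by omega) r.minRev = r.rev :=
  (minRev_eq_iff.mp rfl).imp Eq.symm fun h => rev_eq_iff.mpr h |>.symm

theorem castLE_ne_rev_castLE (i j : Fin m) : (ι i : Fin (2 * m + 1)) ≠ (ι j).rev := by
  simp [Fin.ext_iff]; omega

end Fin

theorem Matrix.mul_single_mul_apply {l n o α : Type*} [Fintype n] [DecidableEq n]
    [NonUnitalNonAssocSemiring α] (X : Matrix l n α) (Y : Matrix n o α) (i j : n) (c : α)
    (p : l) (q : o) : (X * Matrix.single i j c * Y) p q = X p i * c * Y j q := by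
  simp [Matrix.mul_apply, Matrix.single_apply, ite_and]

theorem mem_centroSubalgebra {R : Type*} [CommRing R] {n : ℕ} {a : Matrix (Fin n) (Fin n) R} :
    a ∈ centroSubalgebra R n ↔ ∀ i j, a i j = a i.rev j.rev :=
  Iff.rfl

/-- The factor `σ` in `f_{ii}` is what makes this hold when `i = rev i`. -/
theorem fMat_apply (R : Type*) [Ring R] {n : ℕ} (i j p q : Fin n) :
    fMat R n i j p q = if (p = i ∧ q = j) ∨ (p = i.rev ∧ q = j.rev) then 1 else 0 := by
  unfold fMat
  split_ifs <;> simp only [Matrix.add_apply, Matrix.zero_apply, Matrix.single_apply] <;>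
    split_ifs <;> first
      | (exfalso; simp only [Fin.ext_iff, Fin.val_rev] at *; omega) | simp

section

variable {R : Type*} [Ring R] {m : ℕ}

theorem fMat_col_mid_apply (k r : Fin (2 * m + 1)) :
    fMat R (2 * m + 1) k ⟨m, by omega⟩ r ⟨m, by omega⟩ =
      if r = k ∨ r = k.rev then 1 else 0 := by
  simp [fMat_apply, midFin_rev]

theorem fMat_row_mid_apply (k r : Fin (2 * m + 1)) :
    fMat R (2 * m + 1) ⟨m, by omega⟩ k ⟨m, by omega⟩ r =
      if r = k ∨ r = k.rev then 1 else 0 := by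
  simp [fMat_apply, midFin_rev]

end

section

variable {R : Type*} [CommRing R] {m : ℕ}

def centroToMatrix (a : Matrix (Fin (2 * m + 1)) (Fin (2 * m + 1)) R) :
    Matrix (Fin m) (Fin m) R :=
  Matrix.of fun i j =>
    a (ι i) (ι j)
      - a (ι i) (ι j).rev

theorem centroToMatrix_algebraMap (r : R) :
    centroToMatrix (algebraMap R (Matrix (Fin (2 * m + 1)) (Fin (2 * m + 1)) R) r) =
      algebraMap R _ r := by
  ext i j
  simp only [centroToMatrix, Matrix.of_apply, Matrix.algebraMap_matrix_apply,
    if_neg (Fin.castLE_ne_rev_castLE i j), sub_zero, Fin.castLE_inj]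

theorem centroToMatrix_mul {a b : Matrix (Fin (2 * m + 1)) (Fin (2 * m + 1)) R}
    (hb : b ∈ centroSubalgebra R (2 * m + 1)) :
    centroToMatrix (a * b) = centroToMatrix a * centroToMatrix b := by
  rw [mem_centroSubalgebra] at hb
  ext i j
  simp only [centroToMatrix, Matrix.of_apply, Matrix.mul_apply]
  rw [← Finset.sum_sub_distrib]
  simp_rw [← mul_sub]
  rw [Fin.sum_univ_two_mul_add_one, hb ⟨m, _⟩ (Fin.castLE _ j), midFin_rev, sub_self, mul_zero,
    add_zero]
  refine Finset.sum_congr rfl fun k _ => ?_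
  rw [hb (Fin.castLE _ k).rev, Fin.rev_rev, hb (Fin.castLE _ k).rev (Fin.castLE _ j).rev,
    Fin.rev_rev, Fin.rev_rev]
  ring

theorem centroToMatrix_fMat (i j : Fin m) :
    centroToMatrix (fMat R (2 * m + 1) (ι i) (ι j)) =
      Matrix.single i j 1 := by
  ext p q
  simp only [centroToMatrix, Matrix.of_apply, fMat_apply, Matrix.single_apply, Fin.ext_iff,
    Fin.val_castLE, Fin.val_rev]
  split_ifs <;> first | (exfalso; omega) | simp

theorem centroToMatrix_midE : centroToMatrix (midE R m) = 0 := by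
  ext p q
  simp only [centroToMatrix, midE, Matrix.of_apply, Matrix.single_apply, Fin.ext_iff,
    Fin.val_castLE, Fin.val_rev, Matrix.zero_apply]
  split_ifs <;> first | (exfalso; omega) | simp

variable (R m) in
def centroQuotHom : centroSubalgebra R (2 * m + 1) →ₐ[R] Matrix (Fin m) (Fin m) R where
  toFun a := centroToMatrix a.1
  map_one' := by simpa using centroToMatrix_algebraMap (R := R) (m := m) 1
  map_mul' a b := centroToMatrix_mul b.2
  map_zero' := by ext; simp [centroToMatrix]
  map_add' a b := by
    ext
    simp only [centroToMatrix, AddMemClass.coe_add, Matrix.add_apply, Matrix.of_apply]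
    ring
  commutes' := centroToMatrix_algebraMap

theorem centroQuotHom_fMat (i j : Fin m) :
    centroQuotHom R m ⟨fMat R (2 * m + 1) (ι i) (ι j),
      fMat_memA R _ _ _⟩ = Matrix.single i j 1 :=
  centroToMatrix_fMat i j

theorem centroQuotHom_surjective : Function.Surjective (centroQuotHom R m) := fun b =>
  ⟨∑ i, ∑ j, b i j • (⟨fMat R (2 * m + 1) (ι i) (ι j),
    fMat_memA R _ _ _⟩ : centroSubalgebra R (2 * m + 1)), by
    simp only [map_sum, map_smul, centroQuotHom_fMat, Matrix.smul_single, smul_eq_mul, mul_one]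
    exact (Matrix.matrix_eq_sum_single b).symm⟩

theorem eq_sum_fMat_mul_midE_mul_fMat {a : Matrix (Fin (2 * m + 1)) (Fin (2 * m + 1)) R}
    (hcol : ∀ p q, a p q = a p q.rev) (hrow : ∀ p q, a p q = a p.rev q) :
    a = ∑ k : Fin (m + 1), ∑ l : Fin (m + 1),
      a (Fin.castLE (by omega) k) (Fin.castLE (by omega) l) •
        (fMat R _ (Fin.castLE (by omega) k) ⟨m, by omega⟩ * midE R m *
          fMat R _ ⟨m, by omega⟩ (Fin.castLE (by omega) l)) := by
  ext r s
  simp only [Matrix.sum_apply, Matrix.smul_apply, midE, Matrix.mul_single_mul_apply,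
    fMat_col_mid_apply, fMat_row_mid_apply, ← Fin.minRev_eq_iff, mul_one, mul_ite, mul_zero,
    smul_eq_mul, Finset.sum_ite_eq, Finset.mem_univ, if_true]
  rcases Fin.castLE_minRev r with hr | hr <;> rcases Fin.castLE_minRev s with hs | hs <;>
    rw [hr, hs]
  · rw [← hcol]
  · rw [← hrow]
  · rw [← hcol, ← hrow]

theorem apply_rev_eq_of_centroToMatrix_eq_zero {a : Matrix (Fin (2 * m + 1)) (Fin (2 * m + 1)) R}
    (ha : a ∈ centroSubalgebra R (2 * m + 1)) (h : centroToMatrix a = 0) (p q : Fin (2 * m + 1)) :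
    a p q = a p q.rev := by
  rw [mem_centroSubalgebra] at ha
  have hlt (i j : Fin m) : a (ι i) (ι j) =
      a (ι i) (ι j).rev :=
    sub_eq_zero.mp (congrFun₂ h i j)
  revert p q
  refine Fin.forall_of_lt_of_rev (fun p hp => Fin.forall_of_lt_of_rev ?_ ?_ ?_) ?_ ?_
  · exact fun q hq => hlt ⟨p, hp⟩ ⟨q, hq⟩
  · rw [midFin_rev]
  · intro q hq
    rw [Fin.rev_rev, hq]
  · intro q
    rw [ha, midFin_rev]
  · intro p hp q
    rw [ha p.rev, ha p.rev q.rev, Fin.rev_rev, Fin.rev_rev]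
    exact (hp q).symm

theorem ker_centroQuotHom_le : TwoSidedIdeal.ker (centroQuotHom R m) ≤ midIdeal R m := by
  intro a ha
  rw [TwoSidedIdeal.mem_ker] at ha
  have hcol := apply_rev_eq_of_centroToMatrix_eq_zero a.2 ha
  have hrow (p q : Fin (2 * m + 1)) : a.1 p q = a.1 p.rev q := by
    rw [a.2 p q, ← hcol]
  have hdecomp : a = ∑ k : Fin (m + 1), ∑ l : Fin (m + 1),
      a.1 (Fin.castLE (by omega) k) (Fin.castLE (by omega) l) •
        ((⟨_, fMat_memA R _ (Fin.castLE (by omega) k) ⟨m, by omega⟩⟩ *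
          ⟨midE R m, midE_memA R m⟩ *
          ⟨_, fMat_memA R _ ⟨m, by omega⟩ (Fin.castLE (by omega) l)⟩ :
            centroSubalgebra R (2 * m + 1))) :=
    Subtype.ext (by push_cast; exact eq_sum_fMat_mul_midE_mul_fMat hcol hrow)
  rw [hdecomp]
  refine TwoSidedIdeal.finsetSum_mem _ _ _ fun k _ =>
    TwoSidedIdeal.finsetSum_mem _ _ _ fun l _ => ?_
  rw [Algebra.smul_def]
  exact TwoSidedIdeal.mul_mem_left _ _ _ <| TwoSidedIdeal.mul_mem_right _ _ _ <|
    TwoSidedIdeal.mul_mem_left _ _ _ <| TwoSidedIdeal.subset_span rfl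

theorem midIdeal_le_ker_centroQuotHom : midIdeal R m ≤ TwoSidedIdeal.ker (centroQuotHom R m) :=
  fun _ hx => TwoSidedIdeal.mem_span_iff.mp hx _ <| Set.singleton_subset_iff.mpr <|
    (TwoSidedIdeal.mem_ker _).mpr centroToMatrix_midE

theorem midIdeal_eq_ker_centroQuotHom : midIdeal R m = TwoSidedIdeal.ker (centroQuotHom R m) :=
  le_antisymm midIdeal_le_ker_centroQuotHom ker_centroQuotHom_le

end

/-- for `n = 2m+1`, `m ≥ 1`, the quotient `S_n(R)/J` by the two-sided ideal `J`
generated by `e_{m+1,m+1}` is isomorphic as an `R`-algebra to `M_m(R)`, via the map induced by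
sending `f_{ij}` to the matrix unit at position `(i,j)` for `1 ≤ i,j ≤ m`. -/
theorem centro_quot_iso_matrix (R : Type*) [CommRing R] (m : ℕ) :
    ∃ φ : (midIdeal R m).ringCon.Quotient ≃ₐ[R] Matrix (Fin m) (Fin m) R,
      ∀ i j : Fin m,
        φ (((⟨fMat R (2*m+1) (Fin.castLE (by omega) i) (Fin.castLE (by omega) j),
              fMat_memA R (2*m+1) _ _⟩ : ↥(centroSubalgebra R (2*m+1))) :
            (midIdeal R m).ringCon.Quotient)) = Matrix.single i j 1 := by
  have hrel (a b) : (midIdeal R m).ringCon a b ↔ centroQuotHom R m a = centroQuotHom R m b := by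
    rw [midIdeal_eq_ker_centroQuotHom, TwoSidedIdeal.ker_ringCon]
  let φ := (midIdeal R m).ringCon.liftₐ (centroQuotHom R m) fun a b => (hrel a b).mp
  have hinj : Function.Injective φ := by
    rintro ⟨a⟩ ⟨b⟩ h
    exact Quot.sound ((hrel a b).mpr h)
  have hsurj : Function.Surjective φ := fun b =>
    let ⟨a, ha⟩ := centroQuotHom_surjective b; ⟨a, ha⟩
  exact ⟨AlgEquiv.ofBijective φ ⟨hinj, hsurj⟩, centroQuotHom_fMat⟩
end

section
/- Let R be a commutative ring and n ≥ 2. Then the center of the centrosymmetric matrix algebra S_n(R) equals R·1 + R·c = {r·1 + s·c : r, s ∈ R}, the R-subalgebra generated by the exchange matrix c; in particular, the center is a free R-module of rank 2. -/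
/-- The exchange matrix `c = e_{1,n} + e_{2,n-1} + ⋯ + e_{n,1}` (sum of the matrix units
`e_{i, n+1-i}`, written 0-based using `Fin.rev`). -/
def exchMat (R : Type*) [Ring R] (n : ℕ) : Matrix (Fin n) (Fin n) R :=
  ∑ i : Fin n, Matrix.single i i.rev 1

/-! If `z` commutes with all of `S_n(R)`, fix `i₀` with `i₀ ≠ rev i₀` (possible as `n ≥ 2`) and
compare the `(i₀, j)` entries of `z y` and `y z` for the centrosymmetric matrix
`y = e_{i₀,i} + e_{rev i₀, rev i}`: only the first summand contributes to `y z`, giving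
`z i j = [i = j] z i₀ i₀ + [j = rev i] z i₀ (rev i₀)`. Conversely `c a` and `a c` are `a` with its
rows, resp. columns, reversed, so `c` commutes with every centrosymmetric `a`. -/

open Matrix

theorem Fin.exists_ne_rev {n : ℕ} (hn : 2 ≤ n) : ∃ i : Fin n, i ≠ i.rev :=
  ⟨⟨0, by omega⟩, fun h => by simp [Fin.ext_iff, Fin.val_rev] at h; omega⟩

theorem Matrix.mul_single_apply {l m α : Type*} [Fintype m] [DecidableEq m] [DecidableEq l]
    [NonUnitalNonAssocSemiring α] (M : Matrix l m α) (i : m) (j : l) (c : α) (a b : l) :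
    (M * single i j c) a b = if b = j then M a i * c else 0 := by
  split_ifs with h
  · rw [h, mul_single_apply_same]
  · exact mul_single_apply_of_ne _ _ _ _ _ h M

section
variable {R : Type*} [Ring R] {n : ℕ}

theorem exchMat_apply (i j : Fin n) : exchMat R n i j = if j = i.rev then 1 else 0 := by
  rw [exchMat, Matrix.sum_apply,
    Fintype.sum_eq_single i fun k hk => single_apply_of_row_ne hk _ _ _]
  simp [single_apply, eq_comm]

theorem exchMat_mul_apply (a : Matrix (Fin n) (Fin n) R) (i j : Fin n) :
    (exchMat R n * a) i j = a i.rev j := by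
  simp [mul_apply, exchMat_apply]

theorem mul_exchMat_apply (a : Matrix (Fin n) (Fin n) R) (i j : Fin n) :
    (a * exchMat R n) i j = a i j.rev := by
  simp [mul_apply, exchMat_apply, eq_comm (a := j), Fin.rev_eq_iff]

theorem commute_exchMat_of_mem_centroSubring {a : Matrix (Fin n) (Fin n) R}
    (ha : a ∈ centroSubring R n) : Commute (exchMat R n) a := by
  ext i j
  rw [exchMat_mul_apply, mul_exchMat_apply, ha i.rev j, Fin.rev_rev]

theorem single_add_single_rev_mem_centroSubring (k l : Fin n) :
    single k l (1 : R) + single k.rev l.rev 1 ∈ centroSubring R n := by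
  intro i j
  simp only [Matrix.add_apply, single_apply, ← Fin.rev_eq_iff, Fin.rev_rev]
  exact add_comm _ _

theorem smul_one_add_smul_exchMat_apply (r s : R) (i j : Fin n) :
    (r • (1 : Matrix (Fin n) (Fin n) R) + s • exchMat R n) i j =
      (if i = j then r else 0) + (if j = i.rev then s else 0) := by
  simp [one_apply, exchMat_apply]

theorem eq_smul_one_add_smul_exchMat_of_forall_commute {z : Matrix (Fin n) (Fin n) R}
    (hz : ∀ y ∈ centroSubring R n, z * y = y * z) {i₀ : Fin n} (hi₀ : i₀ ≠ i₀.rev) :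
    z = z i₀ i₀ • (1 : Matrix (Fin n) (Fin n) R) + z i₀ i₀.rev • exchMat R n := by
  ext i j
  have h := congrFun₂ (hz _ (single_add_single_rev_mem_centroSubring i₀ i)) i₀ j
  simp only [Matrix.mul_add, Matrix.add_mul, Matrix.add_apply, mul_single_apply,
    single_mul_apply_same, single_mul_apply_of_ne _ _ _ _ _ hi₀, one_mul, mul_one, add_zero] at h
  rw [smul_one_add_smul_exchMat_apply, ← h]
  simp only [eq_comm]

theorem eq_zero_of_smul_one_add_smul_exchMat_eq_zero {i₀ : Fin n} (hi₀ : i₀ ≠ i₀.rev) {r s : R}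
    (h : r • (1 : Matrix (Fin n) (Fin n) R) + s • exchMat R n = 0) : r = 0 ∧ s = 0 := by
  have h₁ := congrFun₂ h i₀ i₀
  have h₂ := congrFun₂ h i₀ i₀.rev
  simp only [smul_one_add_smul_exchMat_apply, Matrix.zero_apply, hi₀, if_true, if_false] at h₁ h₂
  simpa using And.intro h₁ h₂

end

/-- for a commutative ring `R` and `n ≥ 2`, the center of `S_n(R)` equals
`R·1 + R·c`, the `R`-subalgebra generated by the exchange matrix `c`; moreover `{1, c}` is
`R`-linearly independent, so the center is a free `R`-module of rank `2`. -/
theorem centro_center_eq (R : Type*) [CommRing R] (n : ℕ) (hn : 2 ≤ n) :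
    (∀ z ∈ centroSubring R n,
      ((∀ y ∈ centroSubring R n, z * y = y * z) ↔
        ∃ r s : R, z = r • (1 : Matrix (Fin n) (Fin n) R) + s • exchMat R n)) ∧
    (∀ r s : R, r • (1 : Matrix (Fin n) (Fin n) R) + s • exchMat R n = 0 →
      r = 0 ∧ s = 0) := by
  obtain ⟨i₀, hi₀⟩ := Fin.exists_ne_rev hn
  refine ⟨fun z _ => ⟨fun hz => ?_, ?_⟩,
    fun r s => eq_zero_of_smul_one_add_smul_exchMat_eq_zero hi₀⟩
  · exact ⟨_, _, eq_smul_one_add_smul_exchMat_of_forall_commute hz hi₀⟩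
  · rintro ⟨r, s, rfl⟩ y hy
    exact (((Commute.one_left y).smul_left r).add_left
      ((commute_exchMat_of_mem_centroSubring hy).smul_left s)).eq
end
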